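/- arXiv:1603.00590 — 2 statements merged into one kernel-verified Lean document; each statement's English description precedes it below -/
import Mathlib

section
/- For all u, w ∈ G, the Apollonian distance is bounded above by the Seittenranta distance: α_G(u,w) ≤ δ_G(u,w). (This follows from the pointwise Ptolemy inequality |a−w|·|b−u| ≤ |a−u|·|b−w| + |a−b|·|u−w| valid for all a, b ∈ ℝⁿ.) -/
/-!
Ptolemy's inequality `|a-w| |b-u| ≤ |a-u| |b-w| + |a-b| |u-w|`, divided by `|a-u| |b-w|`, compares
the arguments of the two logarithms term by term. Since `G` is open, frontier points stay a
positive distance away from `u` and `w`, so the Seittenranta terms are bounded above and the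
pointwise comparison passes to the suprema.
-/

open Real

theorem dist_mul_dist_le_add {V P : Type*} [NormedAddCommGroup V] [InnerProductSpace ℝ V]
    [MetricSpace P] [NormedAddTorsor V P] (a b u w : P) :
    dist a w * dist b u ≤ dist a u * dist b w + dist a b * dist u w := by
  have := EuclideanGeometry.mul_dist_le_mul_dist_add_mul_dist (V := V) a u w b
  rw [dist_comm b u, dist_comm b w]
  linarith

theorem log_div_le_log_one_add_div {x y d : ℝ} (hx : 0 ≤ x) (hy : 0 ≤ y) (hd : 0 < d)
    (h : x ≤ d + y) : log (x / d) ≤ log (1 + y / d) := by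
  rcases hx.eq_or_lt with rfl | hx
  · rw [zero_div, log_zero]
    exact log_nonneg (le_add_of_nonneg_right (by positivity))
  · rw [one_add_div hd.ne']
    exact log_le_log (by positivity) (by gcongr)

theorem IsOpen.exists_pos_le_dist_of_mem_frontier {X : Type*} [PseudoMetricSpace X] {G : Set X}
    (hG : IsOpen G) {u : X} (hu : u ∈ G) : ∃ r > 0, ∀ a ∈ frontier G, r ≤ dist a u := by
  obtain ⟨r, hr, hball⟩ := Metric.isOpen_iff.mp hG u hu
  refine ⟨r, hr, fun a ha => not_lt.mp fun hau => ?_⟩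
  exact (hG.frontier_eq ▸ ha).2 (hball (Metric.mem_ball.mpr hau))

section CrossRatio

variable {X : Type*} [PseudoMetricSpace X]

noncomputable def apollonianDist (B : Set X) (u w : X) : ℝ :=
  sSup {L : ℝ | ∃ a ∈ B, ∃ b ∈ B, L = log ((dist a w * dist b u) / (dist a u * dist b w))}

noncomputable def seittenrantaDist (B : Set X) (u w : X) : ℝ :=
  sSup {L : ℝ | ∃ a ∈ B, ∃ b ∈ B, L = log (1 + (dist a b * dist u w) / (dist a u * dist b w))}

theorem dist_mul_dist_div_le_of_le_dist {a b u w : X} {r s : ℝ} (hr : 0 < r) (hs : 0 < s)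
    (hau : r ≤ dist a u) (hbw : s ≤ dist b w) :
    dist a b * dist u w / (dist a u * dist b w) ≤
      dist u w / s + dist u w ^ 2 / (r * s) + dist u w / r := by
  have hau0 : 0 < dist a u := hr.trans_le hau
  have hbw0 : 0 < dist b w := hs.trans_le hbw
  have hab : dist a b ≤ dist a u + dist u w + dist b w := by
    linarith [dist_triangle4 a u w b, dist_comm w b]
  calc dist a b * dist u w / (dist a u * dist b w)
      ≤ (dist a u + dist u w + dist b w) * dist u w / (dist a u * dist b w) := by gcongr
    _ = dist u w / dist b w + dist u w ^ 2 / (dist a u * dist b w) + dist u w / dist a u := by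
        field_simp
    _ ≤ dist u w / s + dist u w ^ 2 / (r * s) + dist u w / r := by gcongr

theorem bddAbove_seittenranta {B : Set X} {u w : X} {r s : ℝ} (hr : 0 < r) (hs : 0 < s)
    (hBu : ∀ a ∈ B, r ≤ dist a u) (hBw : ∀ b ∈ B, s ≤ dist b w) :
    BddAbove {L : ℝ | ∃ a ∈ B, ∃ b ∈ B,
      L = log (1 + (dist a b * dist u w) / (dist a u * dist b w))} := by
  refine ⟨log (1 + (dist u w / s + dist u w ^ 2 / (r * s) + dist u w / r)), ?_⟩
  rintro L ⟨a, ha, b, hb, rfl⟩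
  have hau0 : 0 < dist a u := hr.trans_le (hBu a ha)
  have hbw0 : 0 < dist b w := hs.trans_le (hBw b hb)
  exact log_le_log (by positivity)
    (add_le_add_right (dist_mul_dist_div_le_of_le_dist hr hs (hBu a ha) (hBw b hb)) 1)

end CrossRatio

theorem apollonianDist_le_seittenrantaDist {V P : Type*} [NormedAddCommGroup V]
    [InnerProductSpace ℝ V] [MetricSpace P] [NormedAddTorsor V P] {B : Set P} {u w : P}
    {r s : ℝ} (hr : 0 < r) (hs : 0 < s) (hBu : ∀ a ∈ B, r ≤ dist a u)
    (hBw : ∀ b ∈ B, s ≤ dist b w) :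
    apollonianDist B u w ≤ seittenrantaDist B u w := by
  have hbdd := bddAbove_seittenranta hr hs hBu hBw
  -- `sSup ∅ = 0` in `ℝ`, so the bound also needs `0 ≤ seittenrantaDist B u w`.
  refine Real.sSup_le ?_ (Real.sSup_nonneg ?_)
  · rintro L ⟨a, ha, b, hb, rfl⟩
    refine le_trans ?_ (le_csSup hbdd ⟨a, ha, b, hb, rfl⟩)
    exact log_div_le_log_one_add_div (by positivity) (by positivity)
      (mul_pos (hr.trans_le (hBu a ha)) (hs.trans_le (hBw b hb))) (dist_mul_dist_le_add a b u w)
  · rintro L ⟨a, -, b, -, rfl⟩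
    exact log_nonneg (le_add_of_nonneg_right (by positivity))

theorem apollonian_le_seittenranta_general (n : ℕ)
    (G : Set (EuclideanSpace ℝ (Fin n)))
    (hGopen : IsOpen G)
    (u w : EuclideanSpace ℝ (Fin n)) (hu : u ∈ G) (hw : w ∈ G) :
    (∀ a b u' w' : EuclideanSpace ℝ (Fin n),
        dist a w' * dist b u' ≤ dist a u' * dist b w' + dist a b * dist u' w') ∧
      sSup {L : ℝ | ∃ a ∈ frontier G, ∃ b ∈ frontier G,
          L = Real.log ((dist a w * dist b u) / (dist a u * dist b w))} ≤
        sSup {L : ℝ | ∃ a ∈ frontier G, ∃ b ∈ frontier G,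
          L = Real.log (1 + (dist a b * dist u w) / (dist a u * dist b w))} := by
  obtain ⟨r, hr, hGu⟩ := hGopen.exists_pos_le_dist_of_mem_frontier hu
  obtain ⟨s, hs, hGw⟩ := hGopen.exists_pos_le_dist_of_mem_frontier hw
  exact ⟨dist_mul_dist_le_add, apollonianDist_le_seittenrantaDist hr hs hGu hGw⟩

/-- The pointwise Ptolemy inequality
`|a-w| ⬝ |b-u| ≤ |a-u| ⬝ |b-w| + |a-b| ⬝ |u-w|` holds for all points of `ℝⁿ`, and for a
domain `G ⊊ ℝⁿ` and all `u, w ∈ G` the Apollonian distance is bounded above by the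
Seittenranta distance: `α_G(u,w) ≤ δ_G(u,w)`. -/
theorem apollonian_le_seittenranta (n : ℕ) (hn : 0 < n)
    (G : Set (EuclideanSpace ℝ (Fin n)))
    (hGopen : IsOpen G) (hGconn : IsConnected G) (hGne : G ≠ Set.univ)
    (u w : EuclideanSpace ℝ (Fin n)) (hu : u ∈ G) (hw : w ∈ G) :
    (∀ a b u' w' : EuclideanSpace ℝ (Fin n),
        dist a w' * dist b u' ≤ dist a u' * dist b w' + dist a b * dist u' w') ∧
      sSup {L : ℝ | ∃ a ∈ frontier G, ∃ b ∈ frontier G,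
          L = Real.log ((dist a w * dist b u) / (dist a u * dist b w))} ≤
        sSup {L : ℝ | ∃ a ∈ frontier G, ∃ b ∈ frontier G,
          L = Real.log (1 + (dist a b * dist u w) / (dist a u * dist b w))} :=
  apollonian_le_seittenranta_general n G hGopen u w hu hw
end

section
/- For every y ∈ G with 0 < |y| < d_G(0), the visual angle distance satisfies v_G(0,y) = sup_{a ∈ ∂G} ∠(0,a,y) ≤ arcsin( |y| / d_G(0) ); consequently τ_G(0,y) = tan( v_G(0,y)/2 ) ≤ |y| / ( √( d_G(0)² − |y|² ) + d_G(0) ). -/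
/-!
Every frontier point `a` of `G` satisfies `‖a‖ ≥ d_G(0) > ‖y‖`. In the triangle `0, a, y` the
side `0y` is then no longer than `0a`, so the angle at `a` is acute, and by the law of sines
`sin ∠(0,a,y) · ‖a‖ = sin ∠(0,y,a) · ‖y‖ ≤ ‖y‖`. Hence `∠(0,a,y) ≤ arcsin (‖y‖ / d_G(0))`, and the
bound on `τ_G` follows from the half-angle formula `tan (θ/2) = sin θ / (1 + cos θ)`.
-/

open Real EuclideanGeometry

theorem InnerProductGeometry.angle_le_pi_div_two_of_inner_nonneg {V : Type*}
    [NormedAddCommGroup V] [InnerProductSpace ℝ V] {x y : V} (h : 0 ≤ inner ℝ x y) :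
    InnerProductGeometry.angle x y ≤ π / 2 :=
  arccos_le_pi_div_two.2 (div_nonneg h (by positivity))

-- Where `cos (θ / 2) = 0`, both sides are the junk value `0`.
theorem Real.tan_half_eq_sin_div_one_add_cos (θ : ℝ) : tan (θ / 2) = sin θ / (1 + cos θ) := by
  conv_rhs => rw [← mul_div_cancel₀ θ (two_ne_zero (α := ℝ)), sin_two_mul, cos_two_mul]
  rw [tan_eq_sin_div_cos]
  by_cases hc : cos (θ / 2) = 0
  · simp [hc]
  · field_simp
    ring

theorem Real.tan_half_arcsin_div {r d : ℝ} (hd : 0 < d) (hr : |r| ≤ d) :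
    tan (arcsin (r / d) / 2) = r / (√(d ^ 2 - r ^ 2) + d) := by
  have hrd : |r / d| ≤ 1 := by rwa [abs_div, abs_of_pos hd, div_le_one hd]
  obtain ⟨hlo, hhi⟩ := abs_le.1 hrd
  have hcos : cos (arcsin (r / d)) = √(d ^ 2 - r ^ 2) / d := by
    rw [cos_arcsin, div_pow, one_sub_div (by positivity), sqrt_div' _ (by positivity),
      sqrt_sq hd.le]
  rw [tan_half_eq_sin_div_one_add_cos, sin_arcsin hlo hhi, hcos]
  have hsqrt : 0 ≤ √(d ^ 2 - r ^ 2) := sqrt_nonneg _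
  field_simp
  ring

theorem Metric.infDist_compl_le_dist_of_mem_frontier {X : Type*} [MetricSpace X] {s : Set X}
    {a : X} (ha : a ∈ frontier s) (x : X) : infDist x sᶜ ≤ dist x a := by
  rw [← infDist_closure]
  exact infDist_le_dist_of_mem (frontier_subset_closure (by rwa [frontier_compl]))

theorem EuclideanGeometry.angle_zero_le_arcsin_norm_div {V : Type*}
    [NormedAddCommGroup V] [InnerProductSpace ℝ V] {a y : V} (ha : a ≠ 0) (hya : ‖y‖ ≤ ‖a‖) :
    ∠ 0 a y ≤ arcsin (‖y‖ / ‖a‖) := by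
  have hacute : ∠ 0 a y ≤ π / 2 := by
    refine InnerProductGeometry.angle_le_pi_div_two_of_inner_nonneg ?_
    have hcs : inner ℝ a y ≤ ‖a‖ * ‖y‖ := real_inner_le_norm a y
    simp only [vsub_eq_sub, zero_sub, inner_neg_left, inner_sub_right, real_inner_self_eq_norm_sq]
    nlinarith [norm_nonneg a]
  have hsine : sin (∠ 0 a y) * ‖a‖ ≤ ‖y‖ := by
    have := law_sin y a 0
    rw [angle_comm y a 0, dist_zero_left, dist_zero_right] at this
    rw [this]
    exact mul_le_of_le_one_left (norm_nonneg y) (sin_le_one _)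
  calc ∠ 0 a y = arcsin (sin (∠ 0 a y)) :=
        (arcsin_sin (by linarith [angle_nonneg 0 a y, pi_pos]) hacute).symm
    _ ≤ arcsin (‖y‖ / ‖a‖) :=
        monotone_arcsin ((le_div_iff₀ (norm_pos_iff.2 ha)).2 hsine)

theorem visual_angle_upper_bound_general (n : ℕ)
    (G : Set (EuclideanSpace ℝ (Fin n)))
    (y : EuclideanSpace ℝ (Fin n))
    (hlt : ‖y‖ < Metric.infDist 0 Gᶜ)
    (v : ℝ)
    (hv : v = sSup ((fun a => EuclideanGeometry.angle 0 a y) '' frontier G)) :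
    v ≤ Real.arcsin (‖y‖ / Metric.infDist 0 Gᶜ) ∧
      Real.tan (v / 2) ≤
        ‖y‖ / (Real.sqrt (Metric.infDist 0 Gᶜ ^ 2 - ‖y‖ ^ 2) + Metric.infDist 0 Gᶜ) := by
  set d := Metric.infDist 0 Gᶜ
  have hd : 0 < d := (norm_nonneg y).trans_lt hlt
  have hangle : ∀ a ∈ frontier G, ∠ 0 a y ≤ arcsin (‖y‖ / d) := fun a ha => by
    have hda : d ≤ ‖a‖ := by
      simpa using Metric.infDist_compl_le_dist_of_mem_frontier ha 0
    calc ∠ 0 a y ≤ arcsin (‖y‖ / ‖a‖) :=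
          angle_zero_le_arcsin_norm_div (norm_pos_iff.1 (hd.trans_le hda)) (hlt.le.trans hda)
      _ ≤ arcsin (‖y‖ / d) := monotone_arcsin (div_le_div_of_nonneg_left (norm_nonneg y) hd hda)
  have hv_le : v ≤ arcsin (‖y‖ / d) :=
    hv ▸ Real.sSup_le (Set.forall_mem_image.2 hangle) (arcsin_nonneg.2 (by positivity))
  have hv_nonneg : 0 ≤ v :=
    hv ▸ Real.sSup_nonneg (Set.forall_mem_image.2 fun a _ => angle_nonneg 0 a y)
  refine ⟨hv_le, ?_⟩
  rw [← tan_half_arcsin_div hd ((abs_norm y).le.trans hlt.le)]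
  have hα : arcsin (‖y‖ / d) / 2 < π / 2 := by linarith [arcsin_le_pi_div_two (‖y‖ / d), pi_pos]
  exact strictMonoOn_tan.monotoneOn ⟨by linarith [pi_pos], by linarith⟩ ⟨by linarith [pi_pos], hα⟩
    (by linarith)

/-- Let `G ⊊ ℝⁿ` be a domain with `0 ∈ G`. For every `y ∈ G` with
`0 < |y| < d_G 0`, the visual angle distance
`v_G(0,y) = sup_{a ∈ ∂G} ∠(0,a,y)` satisfies `v_G(0,y) ≤ arcsin (|y| / d_G 0)`, and
consequently `τ_G(0,y) = tan (v_G(0,y)/2) ≤ |y| / (√(d_G 0² - |y|²) + d_G 0)`. -/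
theorem visual_angle_upper_bound (n : ℕ) (hn : 0 < n)
    (G : Set (EuclideanSpace ℝ (Fin n)))
    (hGopen : IsOpen G) (hGconn : IsConnected G) (hGne : G ≠ Set.univ)
    (h0 : (0 : EuclideanSpace ℝ (Fin n)) ∈ G)
    (y : EuclideanSpace ℝ (Fin n)) (hy : y ∈ G)
    (hy0 : 0 < ‖y‖) (hlt : ‖y‖ < Metric.infDist 0 Gᶜ)
    (v : ℝ)
    (hv : v = sSup ((fun a => EuclideanGeometry.angle 0 a y) '' frontier G)) :
    v ≤ Real.arcsin (‖y‖ / Metric.infDist 0 Gᶜ) ∧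
      Real.tan (v / 2) ≤
        ‖y‖ / (Real.sqrt (Metric.infDist 0 Gᶜ ^ 2 - ‖y‖ ^ 2) + Metric.infDist 0 Gᶜ) :=
  visual_angle_upper_bound_general n G y hlt v hv
end
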